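/- arXiv:2403.19024 — 6 statements merged into one kernel-verified Lean document; each statement's English description precedes it below -/
import Mathlib

section
/- A map F : X × U → X is G-invariant if and only if there exists a map F̄ : Xᵇ × U → X such that γ(x)·F(x, u) = F̄(ρ(x), γ(x)·u) for all x ∈ X and u ∈ U. -/
/-- A map `F : X × U → X` is `G`-invariant
(`F (g • x, g • u) = g • F (x, u)` for all `g, x, u`) if and only if there exists a map
`F̄ : Xᵇ × U → X` such that `γ x • F (x, u) = F̄ (ρ x, γ x • u)` for all `x ∈ X`, `u ∈ U`. -/
theorem invariant_iff_exists_reduced_map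
    {G Xa Xb U : Type*} [Group G] [MulAction G (Xa × Xb)] [MulAction G U]
    (c : Xa) (γ : Xa × Xb → G)
    (hγ : ∀ x : Xa × Xb, (γ x • x).1 = c)
    (huniq : ∀ (x : Xa × Xb) (g : G), (g • x).1 = c → g = γ x)
    (ρ : Xa × Xb → Xb) (hρ : ∀ x, ρ x = (γ x • x).2)
    (F : (Xa × Xb) × U → Xa × Xb) :
    (∀ (g : G) (x : Xa × Xb) (u : U), F (g • x, g • u) = g • F (x, u)) ↔
      (∃ Fbar : Xb × U → Xa × Xb,
        ∀ (x : Xa × Xb) (u : U), γ x • F (x, u) = Fbar (ρ x, γ x • u)) := by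
  constructor
  · intro hF
    refine ⟨fun p => F ((c, p.1), p.2), fun x u => ?_⟩
    have hx : γ x • x = (c, ρ x) := by
      ext
      · exact hγ x
      · exact (hρ x).symm
    rw [← hF (γ x) x u, hx]
  · rintro ⟨Fbar, hFbar⟩ g x u
    have hγg : γ (g • x) = γ x * g⁻¹ := by
      refine (huniq (g • x) (γ x * g⁻¹) ?_).symm
      rw [mul_smul, inv_smul_smul]
      exact hγ x
    have hρg : ρ (g • x) = ρ x := by
      rw [hρ, hρ, hγg, mul_smul, inv_smul_smul]
    have h1 := hFbar (g • x) (g • u)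
    rw [hγg, hρg] at h1
    simp only [mul_smul, inv_smul_smul] at h1
    rw [← hFbar x u] at h1
    have h2 := smul_left_cancel (γ x) h1
    rw [inv_smul_eq_iff] at h2
    exact h2
end

section
/- For any map F̄ : Xᵇ × U → X, the map F : X × U → X defined by F(x, u) = γ(x)⁻¹·F̄(ρ(x), γ(x)·u) is G-invariant. -/
/-- For any map `F̄ : Xᵇ × U → X`, the map
`F (x, u) = (γ x)⁻¹ • F̄ (ρ x, γ x • u)` is `G`-invariant. -/
theorem constructed_map_invariant
    {G Xa Xb U : Type*} [Group G] [MulAction G (Xa × Xb)] [MulAction G U]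
    (c : Xa) (γ : Xa × Xb → G)
    (hγ : ∀ x : Xa × Xb, (γ x • x).1 = c)
    (huniq : ∀ (x : Xa × Xb) (g : G), (g • x).1 = c → g = γ x)
    (ρ : Xa × Xb → Xb) (hρ : ∀ x, ρ x = (γ x • x).2)
    (Fbar : Xb × U → Xa × Xb)
    (F : (Xa × Xb) × U → Xa × Xb)
    (hF : ∀ (x : Xa × Xb) (u : U), F (x, u) = (γ x)⁻¹ • Fbar (ρ x, γ x • u)) :
    ∀ (g : G) (x : Xa × Xb) (u : U), F (g • x, g • u) = g • F (x, u) := by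
  intro g x u
  have hkey : γ (g • x) = γ x * g⁻¹ := by
    refine (huniq (g • x) (γ x * g⁻¹) ?_).symm
    rw [mul_smul, inv_smul_smul]
    exact hγ x
  rw [hF, hF, hρ, hρ, hkey, mul_smul, inv_smul_smul, mul_smul, inv_smul_smul,
    mul_inv_rev, inv_inv, mul_smul]
end

section
/- Suppose Xᵃ and Xᵇ are additive abelian groups and X = Xᵃ × Xᵇ carries componentwise addition. For any map ΔF̄ : Xᵇ × U → X, the map F : X × U → X defined by F(x, u) = γ(x)⁻¹·(ΔF̄(ρ(x), γ(x)·u) + γ(x)·x) is G-invariant. -/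
/-- Suppose `Xᵃ` and `Xᵇ` are additive abelian groups and
`X = Xᵃ × Xᵇ` carries componentwise addition. For any map `ΔF̄ : Xᵇ × U → X`,
the map `F (x, u) = (γ x)⁻¹ • (ΔF̄ (ρ x, γ x • u) + γ x • x)` is `G`-invariant. -/
theorem constructed_delta_map_invariant
    {G Xa Xb U : Type*} [Group G] [AddCommGroup Xa] [AddCommGroup Xb]
    [MulAction G (Xa × Xb)] [MulAction G U]
    (c : Xa) (γ : Xa × Xb → G)
    (hγ : ∀ x : Xa × Xb, (γ x • x).1 = c)
    (huniq : ∀ (x : Xa × Xb) (g : G), (g • x).1 = c → g = γ x)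
    (ρ : Xa × Xb → Xb) (hρ : ∀ x, ρ x = (γ x • x).2)
    (ΔFbar : Xb × U → Xa × Xb)
    (F : (Xa × Xb) × U → Xa × Xb)
    (hF : ∀ (x : Xa × Xb) (u : U),
      F (x, u) = (γ x)⁻¹ • (ΔFbar (ρ x, γ x • u) + γ x • x)) :
    ∀ (g : G) (x : Xa × Xb) (u : U), F (g • x, g • u) = g • F (x, u) := by
  intro g x u
  have hkey : γ (g • x) = γ x * g⁻¹ := by
    refine (huniq (g • x) (γ x * g⁻¹) ?_).symm
    rw [mul_smul, inv_smul_smul]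
    exact hγ x
  have h1 : γ (g • x) • (g • x) = γ x • x := by
    rw [hkey, mul_smul, inv_smul_smul]
  rw [hF, hF, hρ, hρ, h1, hkey, mul_smul, inv_smul_smul, mul_inv_rev, inv_inv,
    mul_smul]
end

section
/- Let x = (x₁, …, x₁₁) ∈ ℝ¹¹ with x₁ = cos α and x₃ = sin α for some α ∈ ℝ, and set γ(x) = (−α, −x₅, −x₆, −x₁₁). Then the transformed state φ_{γ(x)}(x) has first component equal to 1, third component equal to 0, fifth component equal to 0, sixth component equal to 0, and eleventh component equal to 0; that is, γ(x) maps x into the cross-section defined by x₁ = 1, x₃ = 0, x₅ = 0, x₆ = 0, x₁₁ = 0. -/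
/-- The action of the group parameterized by `(θ′, δ₁, δ₂, δ₃) ∈ ℝ⁴` on the reacher
state space `ℝ¹¹` (coordinates `x₁, …, x₁₁` are indexed here by `0, …, 10`). -/
noncomputable def reacherPhi (g : ℝ × ℝ × ℝ × ℝ) (x : Fin 11 → ℝ) : Fin 11 → ℝ :=
  match g with
  | (θ', δ₁, δ₂, δ₃) =>
    ![x 0 * Real.cos θ' - x 2 * Real.sin θ',
      x 1,
      x 0 * Real.sin θ' + x 2 * Real.cos θ',
      x 3,
      (x 4 + δ₁) * Real.cos θ' - (x 5 + δ₂) * Real.sin θ',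
      (x 4 + δ₁) * Real.sin θ' + (x 5 + δ₂) * Real.cos θ',
      x 6,
      x 7,
      (x 8 - δ₁) * Real.cos θ' - (x 9 - δ₂) * Real.sin θ',
      (x 8 - δ₁) * Real.sin θ' + (x 9 - δ₂) * Real.cos θ',
      x 10 + δ₃]

/-- If `x₁ = cos α`, `x₃ = sin α` and
`γ(x) = (−α, −x₅, −x₆, −x₁₁)`, then `φ_{γ(x)}(x)` has components `1, 3, 5, 6, 11`
(here indices `0, 2, 4, 5, 10`) equal to `(1, 0, 0, 0, 0)`: `γ(x)` maps `x` into the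
cross-section defined by `x₁ = 1, x₃ = 0, x₅ = 0, x₆ = 0, x₁₁ = 0`. -/
theorem reacherPhi_moving_frame_maps_to_cross_section
    (x : Fin 11 → ℝ) (α : ℝ) (h1 : x 0 = Real.cos α) (h3 : x 2 = Real.sin α) :
    reacherPhi (-α, -x 4, -x 5, -x 10) x 0 = 1 ∧
    reacherPhi (-α, -x 4, -x 5, -x 10) x 2 = 0 ∧
    reacherPhi (-α, -x 4, -x 5, -x 10) x 4 = 0 ∧
    reacherPhi (-α, -x 4, -x 5, -x 10) x 5 = 0 ∧
    reacherPhi (-α, -x 4, -x 5, -x 10) x 10 = 0 := by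
  refine ⟨?_, ?_, ?_, ?_, ?_⟩
  · show x 0 * Real.cos (-α) - x 2 * Real.sin (-α) = 1
    rw [h1, h3, Real.cos_neg, Real.sin_neg]
    nlinarith [Real.sin_sq_add_cos_sq α]
  · show x 0 * Real.sin (-α) + x 2 * Real.cos (-α) = 0
    rw [h1, h3, Real.cos_neg, Real.sin_neg]; ring
  · show (x 4 + -x 4) * Real.cos (-α) - (x 5 + -x 5) * Real.sin (-α) = 0
    ring
  · show (x 4 + -x 4) * Real.sin (-α) + (x 5 + -x 5) * Real.cos (-α) = 0
    ring
  · show x 10 + -x 10 = 0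
    ring
end

section
/- Let x = (x₁, …, x₁₁) ∈ ℝ¹¹ with x₁ = cos α and x₃ = sin α for some α ∈ ℝ, and set γ(x) = (−α, −x₅, −x₆, −x₁₁). Then the components 2, 4, 7, 8, 9, 10 of φ_{γ(x)}(x) equal (x₂, x₄, x₇, x₈, x₁(x₉+x₅) + x₃(x₁₀+x₆), −x₃(x₉+x₅) + x₁(x₁₀+x₆)); that is, the reduced coordinates of the reacher state are ρ(x) = (x₂, x₄, x₇, x₈, x₁(x₉+x₅) + x₃(x₁₀+x₆), −x₃(x₉+x₅) + x₁(x₁₀+x₆)). -/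
/-- If `x₁ = cos α`, `x₃ = sin α` and
`γ(x) = (−α, −x₅, −x₆, −x₁₁)`, then the components `2, 4, 7, 8, 9, 10`
(indices `1, 3, 6, 7, 8, 9` here) of `φ_{γ(x)}(x)` equal
`(x₂, x₄, x₇, x₈, x₁(x₉+x₅) + x₃(x₁₀+x₆), −x₃(x₉+x₅) + x₁(x₁₀+x₆))`: these are
the reduced coordinates `ρ(x)` of the reacher state. -/
theorem reacherPhi_reduced_coordinates
    (x : Fin 11 → ℝ) (α : ℝ) (h1 : x 0 = Real.cos α) (h3 : x 2 = Real.sin α) :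
    reacherPhi (-α, -x 4, -x 5, -x 10) x 1 = x 1 ∧
    reacherPhi (-α, -x 4, -x 5, -x 10) x 3 = x 3 ∧
    reacherPhi (-α, -x 4, -x 5, -x 10) x 6 = x 6 ∧
    reacherPhi (-α, -x 4, -x 5, -x 10) x 7 = x 7 ∧
    reacherPhi (-α, -x 4, -x 5, -x 10) x 8 = x 0 * (x 8 + x 4) + x 2 * (x 9 + x 5) ∧
    reacherPhi (-α, -x 4, -x 5, -x 10) x 9 = -x 2 * (x 8 + x 4) + x 0 * (x 9 + x 5) := by
  refine ⟨rfl, rfl, rfl, rfl, ?_, ?_⟩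
  · show (x 8 - -x 4) * Real.cos (-α) - (x 9 - -x 5) * Real.sin (-α) = _
    rw [Real.cos_neg, Real.sin_neg, h1, h3]; ring
  · show (x 8 - -x 4) * Real.sin (-α) + (x 9 - -x 5) * Real.cos (-α) = _
    rw [Real.cos_neg, Real.sin_neg, h1, h3]; ring
end

section
/- Define ρ : ℝ¹¹ → ℝ⁶ by ρ(x) = (x₂, x₄, x₇, x₈, x₁(x₉+x₅) + x₃(x₁₀+x₆), −x₃(x₉+x₅) + x₁(x₁₀+x₆)). Then ρ(φ_g(x)) = ρ(x) for every g = (θ′, δ₁, δ₂, δ₃) ∈ ℝ⁴ and every x ∈ ℝ¹¹; that is, the reduced coordinates of the reacher are invariant under the group action. -/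
/-- The reduced coordinates of the reacher state:
`ρ(x) = (x₂, x₄, x₇, x₈, x₁(x₉+x₅) + x₃(x₁₀+x₆), −x₃(x₉+x₅) + x₁(x₁₀+x₆))`
(indices shifted down by one here). -/
def reacherRho (x : Fin 11 → ℝ) : ℝ × ℝ × ℝ × ℝ × ℝ × ℝ :=
  (x 1, x 3, x 6, x 7,
   x 0 * (x 8 + x 4) + x 2 * (x 9 + x 5),
   -x 2 * (x 8 + x 4) + x 0 * (x 9 + x 5))

/-- `ρ(φ_g(x)) = ρ(x)` for every `g = (θ′, δ₁, δ₂, δ₃) ∈ ℝ⁴` and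
every `x ∈ ℝ¹¹`: the reduced coordinates of the reacher are invariant under the
group action. -/
theorem reacherRho_invariant (g : ℝ × ℝ × ℝ × ℝ) (x : Fin 11 → ℝ) :
    reacherRho (reacherPhi g x) = reacherRho x := by
  obtain ⟨θ', δ₁, δ₂, δ₃⟩ := g
  have h := Real.sin_sq_add_cos_sq θ'
  have h0 : reacherPhi (θ', δ₁, δ₂, δ₃) x 0 = x 0 * Real.cos θ' - x 2 * Real.sin θ' := rfl
  have h1 : reacherPhi (θ', δ₁, δ₂, δ₃) x 1 = x 1 := rfl
  have h2 : reacherPhi (θ', δ₁, δ₂, δ₃) x 2 = x 0 * Real.sin θ' + x 2 * Real.cos θ' := rfl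
  have h3 : reacherPhi (θ', δ₁, δ₂, δ₃) x 3 = x 3 := rfl
  have h4 : reacherPhi (θ', δ₁, δ₂, δ₃) x 4 = (x 4 + δ₁) * Real.cos θ' - (x 5 + δ₂) * Real.sin θ' := rfl
  have h5 : reacherPhi (θ', δ₁, δ₂, δ₃) x 5 = (x 4 + δ₁) * Real.sin θ' + (x 5 + δ₂) * Real.cos θ' := rfl
  have h6 : reacherPhi (θ', δ₁, δ₂, δ₃) x 6 = x 6 := rfl
  have h7 : reacherPhi (θ', δ₁, δ₂, δ₃) x 7 = x 7 := rfl
  have h8 : reacherPhi (θ', δ₁, δ₂, δ₃) x 8 = (x 8 - δ₁) * Real.cos θ' - (x 9 - δ₂) * Real.sin θ' := rfl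
  have h9 : reacherPhi (θ', δ₁, δ₂, δ₃) x 9 = (x 8 - δ₁) * Real.sin θ' + (x 9 - δ₂) * Real.cos θ' := rfl
  simp only [reacherRho, h0, h1, h2, h3, h4, h5, h6, h7, h8, h9, Prod.mk.injEq]
  refine ⟨trivial, trivial, trivial, trivial, ?_, ?_⟩
  · linear_combination (x 0 * (x 8 + x 4) + x 2 * (x 9 + x 5)) * h
  · linear_combination (-x 2 * (x 8 + x 4) + x 0 * (x 9 + x 5)) * h
end
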